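/- arXiv:1101.3929 — 3 statements merged into one kernel-verified Lean document; each statement's English description precedes it below -/
import Mathlib

section
/- Let T = T_{(G,H,S)} be a KV-trellis of C with state matrices N_j. If j is not an ending point of any of the k characteristic spans (a_l,b_l], then H_j ∉ im N_j (the j-th row of H^T is not in the row space of N_j). -/
open scoped Classical

def circIoc {n : ℕ} (a b : ZMod n) : Set (ZMod n) :=
  {x | 1 ≤ (x - a).val ∧ (x - a).val ≤ (b - a).val}

def circIcc {n : ℕ} (a b : ZMod n) : Set (ZMod n) :=
  {x | (x - a).val ≤ (b - a).val}

def IsSpan {n : ℕ} {F : Type*} [Field F] (c : ZMod n → F) (a b : ZMod n) : Prop :=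
  c a ≠ 0 ∧ c b ≠ 0 ∧ ∀ j, c j ≠ 0 → j ∈ circIcc a b

/-!
Row `l` of the state matrix `N j` is the syndrome of the codeword `G l` truncated to the
circular window `[a l, j)`, and it vanishes unless `j` lies strictly inside `(a l, b l)`.
If `Hᵀ j = ∑ c l • N j l`, then `d = ∑ c l • (G l truncated to [a l, j)) - e_j` is a nonzero
codeword. Choosing, among the rows that occur, the one with the earliest start `a l₀` makes
`(a l₀, j]` a span of `d`; it is shorter than the characteristic span `(a l₀, b l₀]`,
contradicting the minimality of the latter.
-/

open Finset Matrix

namespace ZMod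

variable {n : ℕ} [NeZero n]

theorem apply_eq_apply_of_add_one {α : Type*} {f : ZMod n → α} (hf : ∀ j, f (j + 1) = f j)
    (i j : ZMod n) : f i = f j := by
  have hcast : ∀ t : ℕ, f t = f 0 := by
    intro t
    induction t with
    | zero => rw [Nat.cast_zero]
    | succ t ih => rw [Nat.cast_succ, hf, ih]
  rw [← natCast_zmod_val i, ← natCast_zmod_val j, hcast, hcast]

theorem val_add_one_of_ne_zero {u : ZMod n} (h : u + 1 ≠ 0) : (u + 1).val = u.val + 1 := by
  have hn : n ≠ 1 := by
    rintro rfl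
    exact h (Subsingleton.elim _ _)
  have hlt : u.val + 1 < n := by
    refine lt_of_le_of_ne (val_lt u) fun heq => h ?_
    rw [← val_eq_zero, val_add, val_one'' hn, heq, Nat.mod_self]
  rw [val_add_of_lt (by rwa [val_one'' hn]), val_one'' hn]

theorem val_eq_sub_one_of_add_one_eq_zero {u : ZMod n} (h : u + 1 = 0) : u.val = n - 1 := by
  rw [eq_neg_of_add_eq_zero_left h, neg_val]
  split_ifs with h1
  · have : n = 1 := by simpa using (ZMod.one_eq_zero_iff (n := n)).mp h1
    omega
  · rw [val_one'' fun hn => h1 (by subst hn; exact Subsingleton.elim _ _)]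

theorem val_sub_le_val_sub_iff (a x y : ZMod n) :
    (x - a).val ≤ (y - a).val ↔ (y - x).val ≤ (y - a).val := by
  constructor
  · intro h
    rw [← sub_sub_sub_cancel_right y x a, val_sub h]
    exact Nat.sub_le _ _
  · intro h
    rw [show x - a = (y - a) - (y - x) by abel, val_sub h]
    exact Nat.sub_le _ _

end ZMod

variable {n : ℕ} [NeZero n]

def circIco (a j : ZMod n) : Finset (ZMod n) := univ.filter fun x => (x - a).val < (j - a).val

theorem circIco_self (a : ZMod n) : circIco a a = ∅ := by
  simp [circIco]

theorem mem_circIcc_iff (a j x : ZMod n) : x ∈ circIcc a j ↔ (j - x).val ≤ (j - a).val :=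
  ZMod.val_sub_le_val_sub_iff a x j

theorem mem_circIco_iff (a j x : ZMod n) :
    x ∈ circIco a j ↔ x ≠ j ∧ (j - x).val ≤ (j - a).val := by
  rw [circIco, mem_filter, lt_iff_le_and_ne, ZMod.val_sub_le_val_sub_iff, Ne, Ne,
    (ZMod.val_injective n).eq_iff, sub_left_inj]
  simp only [mem_univ, true_and]
  exact and_comm

theorem circIco_zero (a : ZMod n) : circIco 0 a = univ.filter fun x => x.val < a.val := by
  simp [circIco]

section sums

variable {V : Type*} [AddCommGroup V] {w : ZMod n → V}

theorem sum_circIco_add_one (hw : ∑ x, w x = 0) (a j : ZMod n) :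
    ∑ x ∈ circIco a (j + 1), w x = ∑ x ∈ circIco a j, w x + w j := by
  by_cases hwrap : j - a + 1 = 0
  · have hj : j + 1 = a := by rw [← sub_eq_zero, ← hwrap]; ring
    have herase : circIco a j = univ.erase j := by
      ext x
      have hval := ZMod.val_eq_sub_one_of_add_one_eq_zero hwrap
      have := ZMod.val_lt (x - a)
      have hne : x ≠ j ↔ (x - a).val ≠ n - 1 := by
        rw [← hval, Ne, Ne, (ZMod.val_injective n).eq_iff, sub_left_inj]
      simp only [circIco, mem_filter, mem_erase, mem_univ, true_and, and_true, hval, hne]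
      omega
    rw [hj, circIco_self, herase, sum_erase_add _ _ (mem_univ j), hw, sum_empty]
  · have hinsert : circIco a (j + 1) = insert j (circIco a j) := by
      ext x
      simp only [circIco, mem_filter, mem_insert, mem_univ, true_and]
      rw [add_sub_right_comm, ZMod.val_add_one_of_ne_zero hwrap, Nat.lt_succ_iff,
        le_iff_eq_or_lt, (ZMod.val_injective n).eq_iff, sub_left_inj]
    rw [hinsert, sum_insert (by simp [circIco]), add_comm]

theorem sum_circIco_eq_sub (hw : ∑ x, w x = 0) (a j : ZMod n) :
    ∑ x ∈ circIco a j, w x = ∑ x ∈ circIco 0 j, w x - ∑ x ∈ circIco 0 a, w x := by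
  have hconst := ZMod.apply_eq_apply_of_add_one
    (f := fun j => ∑ x ∈ circIco 0 j, w x - ∑ x ∈ circIco a j, w x)
    (fun j => by simp only [sum_circIco_add_one hw]; abel) j a
  simp only [circIco_self, sum_empty, sub_zero] at hconst
  rw [← hconst]
  abel

end sums

theorem indicator_vecMul_apply {R α ι : Type*} [Semiring R] [Fintype α] (s : Finset α)
    (g : α → R) (M : Matrix α ι R) (i : ι) :
    ((s : Set α).indicator g ᵥ* M) i = ∑ x ∈ s, g x * M x i := by
  simp [vecMul, dotProduct, Set.indicator_apply, ite_mul]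

/- Both sides grow by `G l j • Hᵀ j` from `j` to `j + 1`; when the window wraps around, the
full sum `G l ᵥ* Hᵀ = 0` absorbs the jump. -/
theorem state_eq_indicator_circIco_vecMul {R : Type*} [Ring R] {k m : ℕ}
    {G : Matrix (Fin k) (ZMod n) R} {H : Matrix (Fin m) (ZMod n) R} {a : Fin k → ZMod n}
    {N : ZMod n → Matrix (Fin k) (Fin m) R} (hGH : G * Hᵀ = 0)
    (hN0 : ∀ l c, N 0 l c =
      ∑ j ∈ Finset.univ.filter (fun j : ZMod n => (a l).val ≤ j.val), G l j * H c j)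
    (hNrec : ∀ j : ZMod n, N (j + 1) = N j + Matrix.of (fun l c => G l j * H c j))
    (j : ZMod n) (l : Fin k) :
    N j l = (↑(circIco (a l) j) : Set (ZMod n)).indicator (G l) ᵥ* Hᵀ := by
  ext c
  set w : ZMod n → R := fun x => G l x * H c x
  have hw : ∑ x, w x = 0 := by simpa [Matrix.mul_apply] using congrFun (congrFun hGH l) c
  have hshift := ZMod.apply_eq_apply_of_add_one
    (f := fun j => N j l c - ∑ x ∈ circIco 0 j, w x)
    (fun j => by simp only [hNrec, sum_circIco_add_one hw]; simp [w]) j 0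
  have hN0' : N 0 l c = -∑ x ∈ circIco 0 (a l), w x := by
    rw [hN0, eq_neg_iff_add_eq_zero, circIco_zero, ← hw, add_comm]
    simpa only [not_lt] using sum_filter_add_sum_filter_not univ (fun x => x.val < (a l).val) w
  simp only [circIco_self, sum_empty, sub_zero, hN0'] at hshift
  rw [indicator_vecMul_apply]
  change N j l c = ∑ x ∈ circIco (a l) j, w x
  rw [sum_circIco_eq_sub hw, sub_eq_iff_eq_add.mp hshift]
  abel

theorem indicator_circIco_vecMul_eq_zero {R ι : Type*} [Semiring R] {g : ZMod n → R}
    {M : Matrix (ZMod n) ι R} (hg : g ᵥ* M = 0) {a b j : ZMod n}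
    (hsupp : ∀ x, g x ≠ 0 → x ∈ circIcc a b) (hjb : j ≠ b)
    (hj : j ≠ a → (b - a).val ≤ (j - a).val) :
    (↑(circIco a j) : Set (ZMod n)).indicator g ᵥ* M = 0 := by
  by_cases hja : j = a
  · rw [hja, circIco_self, coe_empty, Set.indicator_empty]
    exact zero_vecMul M
  have hlt : (b - a).val < (j - a).val := by
    refine (hj hja).lt_of_ne ?_
    rw [Ne, (ZMod.val_injective n).eq_iff, sub_left_inj]
    exact hjb.symm
  rwa [Set.indicator_eq_self.mpr]
  intro x hx
  simpa [circIco] using (hsupp x hx).trans_lt hlt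

theorem isSpan_sum_indicator_circIco_sub_single {F ι : Type*} [Field F] {s : Finset ι}
    {a : ι → ZMod n} (ha : Set.InjOn a s) (g : ι → ZMod n → F) {c : ι → F} {j : ZMod n}
    {i₀ : ι} (hi₀ : i₀ ∈ s) (hc : c i₀ ≠ 0) (hg : g i₀ (a i₀) ≠ 0) (hj : j ≠ a i₀)
    (hmax : ∀ i ∈ s, (j - a i).val ≤ (j - a i₀).val) :
    IsSpan (∑ i ∈ s, c i • (↑(circIco (a i) j) : Set (ZMod n)).indicator (g i) - Pi.single j 1)
      (a i₀) j := by
  have happly : ∀ x, (∑ i ∈ s, c i • (↑(circIco (a i) j) : Set (ZMod n)).indicator (g i)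
      - Pi.single j 1 : ZMod n → F) x =
      ∑ i ∈ s, c i * (if x ∈ circIco (a i) j then g i x else 0) - if x = j then 1 else 0 := by
    intro x
    simp [Finset.sum_apply, Set.indicator_apply, Pi.single_apply]
  refine ⟨?_, ?_, fun x hx => ?_⟩
  · rw [happly, if_neg hj.symm, sub_zero, sum_eq_single_of_mem i₀ hi₀]
    · rw [if_pos (by simpa [circIco, Nat.pos_iff_ne_zero, sub_eq_zero] using hj)]
      exact mul_ne_zero hc hg
    · intro i hi hne
      rw [if_neg, mul_zero]
      rw [mem_circIco_iff]
      rintro ⟨-, hle⟩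
      have heq : a i₀ = a i := by
        rw [← sub_right_inj (a := j), ← ZMod.val_injective n |>.eq_iff]
        exact le_antisymm hle (hmax i hi)
      exact hne (ha hi hi₀ heq.symm)
  · rw [happly, if_pos rfl, sum_eq_zero fun i _ => by simp [circIco]]
    simp
  · rw [mem_circIcc_iff]
    by_cases hxj : x = j
    · simp [hxj]
    rw [happly, if_neg hxj, sub_zero] at hx
    obtain ⟨i, hi, hne⟩ := exists_ne_zero_of_sum_ne_zero hx
    have hmem : x ∈ circIco (a i) j := by
      by_contra h
      simp [h] at hne
    exact ((mem_circIco_iff _ _ _).mp hmem).2.trans (hmax i hi)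

theorem stmt9_general (F : Type*) [Field F] (n k m : ℕ) [NeZero n]
    (G : Matrix (Fin k) (ZMod n) F) (H : Matrix (Fin m) (ZMod n) F)
    (hGH : G * H.transpose = 0)
    (hsuppD : ∀ j : ZMod n, ∃ i, H i j ≠ 0)
    (a b : Fin k → ZMod n)
    (hspan : ∀ l, IsSpan (G l) (a l) (b l))
    (ha : Function.Injective a)
    (hchar : ∀ l, ∀ c : ZMod n → F, (∀ i, ∑ j, c j * H i j = 0) → c ≠ 0 →
      ∀ b', IsSpan c (a l) b' → (b l - a l).val ≤ (b' - a l).val)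
    (N : ZMod n → Matrix (Fin k) (Fin m) F)
    (hN0 : ∀ l c, N 0 l c =
      ∑ j ∈ Finset.univ.filter (fun j : ZMod n => (a l).val ≤ j.val), G l j * H c j)
    (hNrec : ∀ j : ZMod n, N (j + 1) = N j + Matrix.of (fun l c => G l j * H c j))
    (j : ZMod n) (hj : ∀ l, b l ≠ j) :
    H.transpose j ∉ Submodule.span F (Set.range (N j)) := by
  intro hmem
  obtain ⟨c, hc⟩ := (Submodule.mem_span_range_iff_exists_fun F).mp hmem
  have hN := state_eq_indicator_circIco_vecMul hGH hN0 hNrec j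
  set active : Fin k → Prop := fun l => j ≠ a l ∧ (j - a l).val < (b l - a l).val
  have hinactive : ∀ l, ¬ active l → N j l = 0 := fun l hl =>
    (hN l).trans <| indicator_circIco_vecMul_eq_zero (congrFun hGH l) (hspan l).2.2 (hj l).symm
      (by simpa [active] using hl)
  set s := univ.filter fun l => c l ≠ 0 ∧ active l
  have hsum : ∑ l ∈ s, c l • N j l = Hᵀ j := by
    rw [sum_filter_of_ne fun l _ hl => ⟨left_ne_zero_of_smul hl,
      not_not.mp (mt (hinactive l) (right_ne_zero_of_smul hl))⟩, hc]
  have hHj : Hᵀ j ≠ 0 := fun h => (hsuppD j).elim fun i hi => hi (congrFun h i)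
  obtain ⟨l₀, hl₀, hmax⟩ :=
    s.exists_max_image (fun l => (j - a l).val) (nonempty_of_sum_ne_zero (hsum ▸ hHj))
  have hl₀' := (mem_filter.mp hl₀).2
  set d : ZMod n → F :=
    ∑ l ∈ s, c l • (↑(circIco (a l) j) : Set (ZMod n)).indicator (G l) - Pi.single j 1
  have hcode : d ᵥ* Hᵀ = 0 := by
    simp only [d, sub_vecMul, sum_vecMul, smul_vecMul, ← hN, hsum, single_one_vecMul]
    exact sub_self _
  have hspan_d : IsSpan d (a l₀) j :=
    isSpan_sum_indicator_circIco_sub_single ha.injOn G hl₀ hl₀'.1 (hspan l₀).1 hl₀'.2.1 hmax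
  exact (hchar l₀ d (fun i => congrFun hcode i) (fun h => hspan_d.2.1 (congrFun h j)) j
    hspan_d).not_gt hl₀'.2.2

/-- In a KV-trellis `T_{(G,H,S)}` of `C = ker Hᵀ` with BCJR state matrices `N_j`:
if `j` is not an ending point of any of the `k` characteristic spans, then `H_j`
(the `j`-th row of `Hᵀ`) is not in the row space of `N_j`. -/
theorem stmt9 (F : Type*) [Field F] (n k m : ℕ) [NeZero n]
    (G : Matrix (Fin k) (ZMod n) F) (H : Matrix (Fin m) (ZMod n) F)
    (hGH : G * H.transpose = 0) (hG : G.rank = k) (hH : H.rank = m)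
    (hsuppD : ∀ j : ZMod n, ∃ i, H i j ≠ 0)
    (a b : Fin k → ZMod n)
    (hspan : ∀ l, IsSpan (G l) (a l) (b l))
    (ha : Function.Injective a) (hb : Function.Injective b)
    (hchar : ∀ l, ∀ c : ZMod n → F, (∀ i, ∑ j, c j * H i j = 0) → c ≠ 0 →
      ∀ b', IsSpan c (a l) b' → (b l - a l).val ≤ (b' - a l).val)
    (N : ZMod n → Matrix (Fin k) (Fin m) F)
    (hN0 : ∀ l c, N 0 l c =
      ∑ j ∈ Finset.univ.filter (fun j : ZMod n => (a l).val ≤ j.val), G l j * H c j)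
    (hNrec : ∀ j : ZMod n, N (j + 1) = N j + Matrix.of (fun l c => G l j * H c j))
    (j : ZMod n) (hj : ∀ l, b l ≠ j) :
    H.transpose j ∉ Submodule.span F (Set.range (N j)) :=
  stmt9_general F n k m G H hGH hsuppD a b hspan ha hchar N hN0 hNrec j hj
end

section
/- (The probing vector v exists and is unique.) In the setting of the dualization procedure: let Q_j be the BCJR state matrices of the trellis built from all characteristic generators except the one with span (a_0, 0]. Then rk Q_j = n−k if j ∈ (0,a_0] and rk Q_j = n−k−1 otherwise, and there exists a unique v ∈ F^{n−k} with G_0^T = Q_1 vᵀ, where G_0^T is the 0-th column of the matrix of remaining generators. -/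
open scoped Classical

/-!
Write `S_l = (a_l, l]` for the characteristic spans. Row `l` of `Q_j` is the syndrome
`H (x_l restricted to [a_l, j))`, which vanishes unless `j ∈ S_l`. Each `x_l` is a shortest
codeword starting at `a_l`: the span lengths sum to `n m` by the covering hypothesis, while the
shortest lengths sum to at least `n m`, because at every position `j` the shortest codewords
whose windows miss `j` have distinct leading positions (seen from `j`), hence are independent
in a code of dimension `n - m`. Minimality makes the nonzero rows of `Q_j` independent: a
relation among them produces a codeword strictly shorter than `x_l` for the earliest `a_l`
involved. So `rk Q_j` counts the spans `S_l ∋ j` with `l ≠ 0`, i.e. it is `m - 1` or `m`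
according as `j ∈ S_0` or not. Finally `Q_1 = Q_0 + G_0ᵀ H_0`, and the rank jumps from
`m - 1` to `m`, the number of columns, so `G_0ᵀ` lies in the column space of `Q_1`, on which
`Q_1` acts injectively.
-/

open Finset Matrix

namespace ZMod

variable {n : ℕ} [NeZero n]

theorem val_sub_eq_ite (a b : ZMod n) :
    (a - b).val = if b.val ≤ a.val then a.val - b.val else a.val + n - b.val := by
  split_ifs with h
  · exact val_sub h
  · have hb := val_lt b
    have : a - b = ((a.val + n - b.val : ℕ) : ZMod n) := by
      rw [Nat.cast_sub (by omega), Nat.cast_add, natCast_self, natCast_zmod_val,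
        natCast_zmod_val, add_zero]
    rw [this, val_cast_of_lt (by have := val_lt a; omega)]

theorem val_sub_one_of_ne_zero {u : ZMod n} (hu : u ≠ 0) : (u - 1).val = u.val - 1 := by
  have h1 : 1 ≤ u.val := Nat.one_le_iff_ne_zero.2 ((val_ne_zero u).2 hu)
  have : u - 1 = ((u.val - 1 : ℕ) : ZMod n) := by
    rw [Nat.cast_sub h1, natCast_zmod_val, Nat.cast_one]
  rw [this, val_cast_of_lt (by have := val_lt u; omega)]

theorem val_neg_one_eq : (-1 : ZMod n).val = n - 1 := by
  obtain ⟨n, rfl⟩ := Nat.exists_eq_add_one_of_ne_zero (NeZero.ne n)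
  exact val_neg_one n

theorem val_sub_inj {a b c : ZMod n} : (a - c).val = (b - c).val ↔ a = b := by
  rw [val_injective n |>.eq_iff, sub_left_inj]

theorem val_add_one_sub {j a : ZMod n} (h : j + 1 ≠ a) :
    (j + 1 - a).val = (j - a).val + 1 := by
  have hu : j + 1 - a ≠ 0 := sub_ne_zero.2 h
  have h1 := val_sub_one_of_ne_zero hu
  rw [show j + 1 - a - 1 = j - a by ring] at h1
  have := Nat.one_le_iff_ne_zero.2 ((val_ne_zero _).2 hu)
  omega

theorem val_sub_le_val_sub_of_not_mem {a j k : ZMod n} {d : ℕ}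
    (hj : ¬(1 ≤ (j - a).val ∧ (j - a).val ≤ d)) (hk : (k - a).val ≤ d) :
    (a - j).val ≤ (k - j).val := by
  have := val_lt a
  have := val_lt j
  have := val_lt k
  simp only [val_sub_eq_ite] at hj hk ⊢
  split_ifs at hj hk ⊢ <;> omega

theorem val_sub_le_of_val_sub_le_of_ne {a b j : ZMod n} (hab : b ≠ a)
    (h : (j - a).val ≤ (j - b).val) : (j - a).val ≤ (b - a).val := by
  have := val_lt a
  have := val_lt b
  have := val_lt j
  have : b.val ≠ a.val := fun h => hab (val_injective n h)
  simp only [val_sub_eq_ite] at h ⊢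
  split_ifs at h ⊢ <;> omega

theorem val_sub_lt_of_val_sub_lt_of_le {a b j k : ZMod n}
    (hk : (k - a).val < (j - a).val) (h : (j - a).val ≤ (j - b).val) :
    (k - b).val < (j - b).val := by
  have := val_lt a
  have := val_lt b
  have := val_lt j
  have := val_lt k
  simp only [val_sub_eq_ite] at hk h ⊢
  split_ifs at hk h ⊢ <;> omega

end ZMod

section CircularIntervals

variable {n : ℕ} [NeZero n]

theorem mem_circIoc_iff_not_mem_circIoc {a b j : ZMod n} (h : a ≠ b) :
    j ∈ circIoc a b ↔ j ∉ circIoc b a := by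
  have := ZMod.val_lt a
  have := ZMod.val_lt b
  have := ZMod.val_lt j
  have hab : a.val ≠ b.val := fun h' => h (ZMod.val_injective n h')
  simp only [circIoc, Set.mem_ofPred_eq, ZMod.val_sub_eq_ite]
  split_ifs <;> omega

theorem one_mem_circIoc_zero {a : ZMod n} (ha : a ≠ 0) : (1 : ZMod n) ∈ circIoc 0 a := by
  have hn : n ≠ 1 := by
    rintro rfl
    exact ha (Subsingleton.elim _ _)
  simp only [circIoc, Set.mem_ofPred_eq, sub_zero, ZMod.val_one'' hn]
  exact ⟨le_rfl, Nat.one_le_iff_ne_zero.2 ((ZMod.val_ne_zero a).2 ha)⟩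

theorem card_filter_val_sub_mem_Icc (a : ZMod n) {d : ℕ} (hd : d < n) :
    #{j : ZMod n | 1 ≤ (j - a).val ∧ (j - a).val ≤ d} = d := by
  have hcast : ∀ t : ℕ, t < n → ((a + t) - a).val = t := fun t ht => by
    rw [add_sub_cancel_left, ZMod.val_cast_of_lt ht]
  calc #{j : ZMod n | 1 ≤ (j - a).val ∧ (j - a).val ≤ d} = #(Icc 1 d) := by
        refine card_nbij' (fun j => (j - a).val) (fun t => a + t) (fun j hj => by simpa using hj)
          (fun t ht => ?_) (fun j _ => by simp) (fun t ht => hcast t ?_)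
        · simp only [coe_Icc, Set.mem_Icc] at ht
          simpa only [coe_filter, Set.mem_ofPred_eq, mem_univ, true_and, hcast t (by omega)]
            using ht
        · simp only [coe_Icc, Set.mem_Icc] at ht
          omega
    _ = d := by simp

theorem sum_eq_sum_card_filter {ι : Type*} [Fintype ι] (s : ι → ZMod n) (d : ι → ℕ)
    (hd : ∀ i, d i < n) :
    ∑ i, d i = ∑ j : ZMod n, #{i | 1 ≤ (j - s i).val ∧ (j - s i).val ≤ d i} := by
  simp only [card_filter]
  rw [sum_comm]
  exact sum_congr rfl fun i _ => by rw [← card_filter, card_filter_val_sub_mem_Icc _ (hd i)]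

end CircularIntervals

theorem Finset.card_filter_ne_and {α : Type*} [Fintype α] [DecidableEq α] (p : α → Prop)
    [DecidablePred p] (a : α) :
    #{x | x ≠ a ∧ p x} = if p a then #{x | p x} - 1 else #{x | p x} := by
  have : ({x | x ≠ a ∧ p x} : Finset α) = ({x | p x} : Finset α).erase a := by
    ext x
    simp
  rw [this, card_erase_eq_ite]
  simp

theorem linearIndependent_of_pivot {K ι κ β : Type*} [Ring K] [NoZeroDivisors K] [Fintype ι]
    [LinearOrder β] {v : ι → κ → K} (p : ι → κ) (r : κ → β)
    (hinj : Function.Injective (r ∘ p))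
    (hpiv : ∀ i, v i (p i) ≠ 0) (hlead : ∀ i k, v i k ≠ 0 → r (p i) ≤ r k) :
    LinearIndependent K v := by
  rw [Fintype.linearIndependent_iff]
  by_contra! h
  obtain ⟨g, hg, i₀, hi₀⟩ := h
  obtain ⟨i, hi, hmin⟩ := exists_min_image {i | g i ≠ 0} (r ∘ p)
    ⟨i₀, by simpa using hi₀⟩
  replace hi : g i ≠ 0 := by simpa using hi
  have hsingle : ∑ i', g i' * v i' (p i) = g i * v i (p i) := by
    refine sum_eq_single i (fun i' _ hne => ?_) (by simp)
    by_contra h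
    obtain ⟨hg', hv'⟩ := mul_ne_zero_iff.1 h
    exact hne (hinj (le_antisymm (hlead i' _ hv') (hmin i' (by simpa using hg'))))
  have h0 := congrFun hg (p i)
  simp only [Finset.sum_apply, Pi.smul_apply, smul_eq_mul, Pi.zero_apply, hsingle] at h0
  exact mul_ne_zero hi (hpiv i) h0

namespace Matrix

variable {ι κ K : Type*} [Fintype κ] [Field K]

theorem rank_eq_card_of_linearIndependent [Fintype ι] (M : Matrix ι κ K) (p : ι → Prop)
    [DecidablePred p]
    (hzero : ∀ i, ¬p i → M i = 0) (hli : LinearIndependent K fun i : {i // p i} => M i) :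
    M.rank = Fintype.card {i // p i} := by
  rw [rank_eq_finrank_span_row, ← finrank_span_eq_card hli]
  suffices Submodule.span K (Set.range M.row) =
      Submodule.span K (Set.range fun i : {i // p i} => M i) by
    rw [this]
  refine le_antisymm (Submodule.span_le.2 ?_) (Submodule.span_mono ?_)
  · rintro _ ⟨i, rfl⟩
    by_cases hi : p i
    · exact Submodule.subset_span ⟨⟨i, hi⟩, rfl⟩
    · simp [row, hzero i hi]
  · rintro _ ⟨i, rfl⟩
    exact ⟨i, rfl⟩

theorem existsUnique_mulVec_eq_of_rank_lt {A : Matrix ι κ K} {g : ι → K} {h : κ → K}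
    (hlt : A.rank < (A + vecMulVec g h).rank)
    (hfull : (A + vecMulVec g h).rank = Fintype.card κ) :
    ∃! v, (A + vecMulVec g h) *ᵥ v = g := by
  set B := A + vecMulVec g h
  have hle : LinearMap.range B.mulVecLin ≤ LinearMap.range A.mulVecLin ⊔ K ∙ g := by
    rintro _ ⟨v, rfl⟩
    have : B.mulVecLin v = A *ᵥ v + (h ⬝ᵥ v) • g := by
      ext i
      simp [B, vecMulVec_mulVec, mul_comm]
    rw [this]
    exact Submodule.add_mem_sup ⟨v, rfl⟩
      (Submodule.smul_mem _ _ (Submodule.mem_span_singleton_self g))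
  have hg : Module.finrank K (K ∙ g) ≤ 1 := by
    simpa using finrank_span_le_card ({g} : Set (ι → K))
  have hsup : Module.finrank K ↥(LinearMap.range A.mulVecLin ⊔ K ∙ g) ≤ A.rank + 1 := by
    have := Submodule.finrank_add_le_finrank_add_finrank (LinearMap.range A.mulVecLin) (K ∙ g)
    rw [rank]
    omega
  have hrange : LinearMap.range B.mulVecLin = LinearMap.range A.mulVecLin ⊔ K ∙ g :=
    Submodule.eq_of_le_of_finrank_le hle (hsup.trans hlt)
  obtain ⟨v, hv⟩ : g ∈ LinearMap.range B.mulVecLin := by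
    rw [hrange]
    exact Submodule.mem_sup_right (Submodule.mem_span_singleton_self g)
  have hker : LinearMap.ker B.mulVecLin = ⊥ := by
    have := LinearMap.finrank_range_add_finrank_ker B.mulVecLin
    rw [Module.finrank_fintype_fun_eq_card, ← rank, hfull] at this
    exact Submodule.finrank_eq_zero.1 (by omega)
  exact ⟨v, hv, fun w hw => LinearMap.ker_eq_bot.1 hker (hw.trans hv.symm)⟩

end Matrix

theorem IsSpan.ne_of_mulVec_eq_zero {n m : ℕ} {F : Type*} [Field F] [NeZero n]
    {H : Matrix (Fin m) (ZMod n) F} {c : ZMod n → F} {a b : ZMod n} (hs : IsSpan c a b)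
    (hc : H *ᵥ c = 0) (hcol : ∃ i, H i a ≠ 0) : a ≠ b := by
  rintro rfl
  obtain ⟨i, hi⟩ := hcol
  have hsupp : ∀ k, k ≠ a → c k = 0 := fun k hk => by
    by_contra h
    have : (k - a).val ≤ (a - a).val := hs.2.2 k h
    rw [sub_self, ZMod.val_zero, Nat.le_zero, ZMod.val_eq_zero, sub_eq_zero] at this
    exact hk this
  have := congrFun hc i
  rw [mulVec, dotProduct, sum_eq_single a (fun k _ hk => by simp [hsupp k hk]) (by simp)] at this
  exact mul_ne_zero hi hs.1 this

section Window

variable {n : ℕ} [NeZero n] {F : Type*} [Field F]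

/-- The restriction of `c` to the circular window `[a, j)`. For a codeword `c` with span starting
at `a`, `H *ᵥ pastPart c a j` is its BCJR state at time `j`. -/
def pastPart (c : ZMod n → F) (a j : ZMod n) : ZMod n → F :=
  fun k => if (k - a).val < (j - a).val then c k else 0

/-- The `if` term accounts for the wrap-around at `j + 1 = a`, where the window becomes empty. -/
theorem pastPart_succ_add (c : ZMod n → F) (a j : ZMod n) :
    pastPart c a (j + 1) + (if j + 1 = a then c else 0) = pastPart c a j + Pi.single j (c j) := by
  ext k
  have hk : (k - a).val = (j - a).val ↔ k = j := ZMod.val_sub_inj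
  have hlt := ZMod.val_lt (k - a)
  by_cases hja : j + 1 = a
  · have h0 : (j + 1 - a).val = 0 := by rw [hja, sub_self, ZMod.val_zero]
    have h1 : (j - a).val = n - 1 := by
      rw [show j - a = -1 by rw [← hja]; ring, ZMod.val_neg_one_eq]
    by_cases hkj : k = j
    · subst hkj
      simp [pastPart, h0, h1, if_pos hja]
    · have : (k - a).val ≠ n - 1 := h1 ▸ mt hk.1 hkj
      simp [pastPart, h0, h1, if_pos hja, hkj]
      omega
  · simp only [pastPart, Pi.add_apply, if_neg hja, Pi.zero_apply, add_zero, Pi.single_apply,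
      ZMod.val_add_one_sub hja]
    by_cases hkj : k = j
    · subst hkj
      simp
    · have : (k - a).val < (j - a).val + 1 ↔ (k - a).val < (j - a).val := by
        have := mt hk.1 hkj
        omega
      simp only [hkj, if_false, add_zero, this]

variable {m : ℕ} {H : Matrix (Fin m) (ZMod n) F} {c : ZMod n → F}

theorem mulVec_pastPart_succ (hc : H *ᵥ c = 0) (a j : ZMod n) :
    H *ᵥ pastPart c a (j + 1) = H *ᵥ pastPart c a j + fun i => c j * H i j := by
  have h := congrArg (H *ᵥ ·) (pastPart_succ_add c a j)
  simp only [mulVec_add, mulVec_single] at h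
  split_ifs at h
  · rw [hc, add_zero] at h
    rw [h]
    ext i
    simp [mul_comm]
  · rw [mulVec_zero, add_zero] at h
    rw [h]
    ext i
    simp [mul_comm]

theorem mulVec_pastPart_zero_apply (hc : H *ᵥ c = 0) (a : ZMod n) (i : Fin m) :
    (H *ᵥ pastPart c a 0) i = ∑ k with a.val ≤ k.val, c k * H i k := by
  by_cases ha : a = 0
  · subst ha
    have : pastPart c 0 0 = 0 := funext fun k => by simp [pastPart]
    rw [this, mulVec_zero, ← congrFun hc i]
    simp [mulVec, dotProduct, mul_comm]
  · have ha' := (ZMod.val_ne_zero a).2 ha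
    have hcond : ∀ k : ZMod n, (k - a).val < (0 - a).val ↔ a.val ≤ k.val := fun k => by
      have := ZMod.val_lt a
      have := ZMod.val_lt k
      rw [ZMod.val_sub_eq_ite, ZMod.val_sub_eq_ite, ZMod.val_zero]
      split_ifs <;> omega
    simp only [mulVec, dotProduct, pastPart, hcond, sum_filter]
    exact sum_congr rfl fun k _ => by split_ifs <;> simp [mul_comm]

theorem mulVec_pastPart_eq_zero {a b j : ZMod n} (hc : H *ᵥ c = 0) (hs : IsSpan c a b)
    (hj : j ∉ circIoc a b) : H *ᵥ pastPart c a j = 0 := by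
  simp only [circIoc, Set.mem_ofPred_eq, not_and_or, not_le, Nat.lt_one_iff] at hj
  rcases hj with hj | hj
  · have : pastPart c a j = 0 := funext fun k => by simp [pastPart, hj]
    rw [this, mulVec_zero]
  · have : pastPart c a j = c := funext fun k => by
      have hsupp : c k ≠ 0 → (k - a).val ≤ (b - a).val := hs.2.2 k
      by_cases hk : c k = 0
      · simp [pastPart, hk]
      · simp only [pastPart, if_pos (lt_of_le_of_lt (hsupp hk) hj)]
    rw [this, hc]

end Window

section MinSpan

variable {n : ℕ} {F : Type*} [Field F] (C : Submodule F (ZMod n → F))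

def HasSpanWithin (a : ZMod n) (d : ℕ) : Prop :=
  ∃ z ∈ C, z a ≠ 0 ∧ ∀ k, z k ≠ 0 → (k - a).val ≤ d

/-- The length of a shortest codeword of `C` starting at `a` (junk value `0` if there is none). -/
noncomputable def minSpan (a : ZMod n) : ℕ := sInf {d | HasSpanWithin C a d}

variable {C}

theorem minSpan_le {a : ZMod n} {d : ℕ} (h : HasSpanWithin C a d) : minSpan C a ≤ d :=
  Nat.sInf_le h

theorem hasSpanWithin_minSpan {a : ZMod n} {d : ℕ} (h : HasSpanWithin C a d) :
    HasSpanWithin C a (minSpan C a) :=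
  Nat.sInf_mem (s := {d | HasSpanWithin C a d}) ⟨d, h⟩

theorem minSpan_lt [NeZero n] {a : ZMod n} {d : ℕ} (h : HasSpanWithin C a d) :
    minSpan C a < n := by
  obtain ⟨z, hz, hza, -⟩ := h
  have := NeZero.pos n
  exact (minSpan_le ⟨z, hz, hza, fun k _ => Nat.le_sub_one_of_lt (ZMod.val_lt _)⟩).trans_lt
    (by omega)

theorem hasSpanWithin_of_isSpan {c : ZMod n → F} {a b : ZMod n} (hc : c ∈ C)
    (h : IsSpan c a b) :
    HasSpanWithin C a (b - a).val :=
  ⟨c, hc, h.1, h.2.2⟩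

theorem le_card_filter_minSpan [NeZero n] {m : ℕ} (hC : Module.finrank F C + m ≤ n)
    (hex : ∀ a, ∃ d, HasSpanWithin C a d) (j : ZMod n) :
    m ≤ #{a | 1 ≤ (j - a).val ∧ (j - a).val ≤ minSpan C a} := by
  choose z hzC hza hzs using fun a => hasSpanWithin_minSpan (hex a).choose_spec
  set A : Finset (ZMod n) := {a | 1 ≤ (j - a).val ∧ (j - a).val ≤ minSpan C a}
  have hli : LinearIndependent F (fun a : ↥Aᶜ => z a) :=
    linearIndependent_of_pivot Subtype.val (fun k => (k - j).val)
      (fun a b h => Subtype.ext (ZMod.val_sub_inj.1 h)) (fun a => hza a)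
      (fun a k hk => ZMod.val_sub_le_val_sub_of_not_mem (by simpa [A] using a.2) (hzs a k hk))
  have hcard : Fintype.card ↥Aᶜ ≤ Module.finrank F C := by
    rw [← finrank_span_eq_card hli]
    exact Submodule.finrank_mono (Submodule.span_le.2 (Set.range_subset_iff.2 fun a => hzC a))
  have := card_compl_add_card A
  rw [ZMod.card] at this
  simp only [Fintype.card_coe] at hcard
  omega

theorem minSpan_eq_of_isSpan [NeZero n] {m : ℕ} {x : ZMod n → ZMod n → F}
    {aa : ZMod n → ZMod n} (hC : Module.finrank F C + m ≤ n) (hx : ∀ l, x l ∈ C)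
    (hspans : ∀ l, IsSpan (x l) (aa l) l) (ha : Function.Injective aa)
    (hcover : ∀ j : ZMod n, #{l | j ∈ circIoc (aa l) l} = m) (l : ZMod n) :
    minSpan C (aa l) = (l - aa l).val := by
  have hle : ∀ l, minSpan C (aa l) ≤ (l - aa l).val := fun l =>
    minSpan_le (hasSpanWithin_of_isSpan (hx l) (hspans l))
  have hbij : Function.Bijective aa := Finite.injective_iff_bijective.1 ha
  have hex : ∀ a, ∃ d, HasSpanWithin C a d := fun a => by
    obtain ⟨l, rfl⟩ := hbij.2 a
    exact ⟨_, hasSpanWithin_of_isSpan (hx l) (hspans l)⟩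
  have hsum : ∑ l, (l - aa l).val ≤ ∑ l, minSpan C (aa l) := calc
    ∑ l, (l - aa l).val = ∑ j : ZMod n, #{l | j ∈ circIoc (aa l) l} := by
      convert sum_eq_sum_card_filter aa (fun l => (l - aa l).val) fun l => ZMod.val_lt _
      exact Iff.rfl
    _ = ∑ _j : ZMod n, m := sum_congr rfl fun j _ => hcover j
    _ ≤ ∑ j : ZMod n, #{a | 1 ≤ (j - a).val ∧ (j - a).val ≤ minSpan C a} :=
      sum_le_sum fun j _ => le_card_filter_minSpan hC hex j
    _ = ∑ a, minSpan C a :=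
      (sum_eq_sum_card_filter id _ fun a => minSpan_lt (hex a).choose_spec).symm
    _ = ∑ l, minSpan C (aa l) := (Fintype.sum_bijective aa hbij _ _ fun _ => rfl).symm
  exact (sum_eq_sum_iff_of_le fun l _ => hle l).1
    (le_antisymm (sum_le_sum fun l _ => hle l) hsum) l (mem_univ l)

end MinSpan

section StateMatrix

variable {n : ℕ} [NeZero n] {F : Type*} [Field F] {m : ℕ} {H : Matrix (Fin m) (ZMod n) F}
  {x : ZMod n → ZMod n → F} {aa : ZMod n → ZMod n}
  {Q : ZMod n → Matrix {l : ZMod n // l ≠ 0} (Fin m) F}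

theorem linearIndependent_mulVec_pastPart (ha : Function.Injective aa)
    (hstart : ∀ l, x l (aa l) ≠ 0)
    (hmin : ∀ l, minSpan (LinearMap.ker H.mulVecLin) (aa l) = (l - aa l).val) (j : ZMod n) :
    LinearIndependent F
      (fun l : {l // j ∈ circIoc (aa l) l} => H *ᵥ pastPart (x l) (aa l) j) := by
  rw [Fintype.linearIndependent_iff]
  by_contra! h
  obtain ⟨g, hg, l₁, hl₁⟩ := h
  -- among the indices occurring in the relation, `l₀` is one whose window starts earliest
  obtain ⟨l₀, hl₀, hmax⟩ := exists_max_image {l | g l ≠ 0} (fun l => (j - aa l).val)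
    ⟨l₁, by simpa using hl₁⟩
  replace hl₀ : g l₀ ≠ 0 := by simpa using hl₀
  set z := ∑ l, g l • pastPart (x l) (aa l) j
  have hzC : z ∈ LinearMap.ker H.mulVecLin := by
    simpa [z, map_sum, mulVec_smul] using hg
  have hz0 : z (aa l₀) ≠ 0 := by
    have : z (aa l₀) = g l₀ * x l₀ (aa l₀) := by
      simp only [z, Finset.sum_apply, Pi.smul_apply, smul_eq_mul]
      refine (sum_eq_single l₀ (fun l _ hne => ?_) (by simp)).trans ?_
      · by_cases hgl : g l = 0
        · simp [hgl]
        have := ZMod.val_sub_le_of_val_sub_le_of_ne (fun h => hne (Subtype.ext (ha h).symm))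
          (hmax l (by simpa using hgl))
        simp [pastPart, this]
      · simp [pastPart, Nat.lt_of_succ_le l₀.2.1]
    rw [this]
    exact mul_ne_zero hl₀ (hstart l₀)
  have hzs : ∀ k, z k ≠ 0 → (k - aa l₀).val ≤ (j - aa l₀).val - 1 := by
    intro k hk
    obtain ⟨l, -, hl⟩ := exists_ne_zero_of_sum_ne_zero (by simpa [z] using hk)
    obtain ⟨hgl, hkl⟩ := mul_ne_zero_iff.1 hl
    have hwin : (k - aa l).val < (j - aa l).val := by
      by_contra h
      simp [pastPart, h] at hkl
    have := ZMod.val_sub_lt_of_val_sub_lt_of_le hwin (hmax l (by simpa using hgl))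
    omega
  have hshort := minSpan_le ⟨z, hzC, hz0, hzs⟩
  rw [hmin] at hshort
  have hj : j ∈ circIoc (aa l₀) l₀ := l₀.2
  simp only [circIoc, Set.mem_ofPred_eq] at hj
  omega

theorem stateMatrix_eq (hx : ∀ l, H *ᵥ x l = 0)
    (hQ0 : ∀ l c, Q 0 l c =
      ∑ j ∈ Finset.univ.filter (fun j : ZMod n => (aa l.1).val ≤ j.val), x l.1 j * H c j)
    (hQrec : ∀ j : ZMod n, Q (j + 1) = Q j + Matrix.of (fun l c => x l.1 j * H c j))
    (j : ZMod n) (l : {l : ZMod n // l ≠ 0}) :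
    Q j l = H *ᵥ pastPart (x l) (aa l) j := by
  suffices ∀ t : ℕ, ∀ l : {l : ZMod n // l ≠ 0}, Q t l = H *ᵥ pastPart (x l) (aa l) t by
    simpa using this j.val l
  intro t
  induction t with
  | zero =>
    intro l
    ext c
    simp [hQ0, mulVec_pastPart_zero_apply (hx l)]
  | succ t ih =>
    intro l
    push_cast
    rw [hQrec, mulVec_pastPart_succ (hx l), ← ih]
    rfl

theorem rank_stateMatrix (hx : ∀ l, H *ᵥ x l = 0) (hspans : ∀ l, IsSpan (x l) (aa l) l)
    (ha : Function.Injective aa)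
    (hmin : ∀ l, minSpan (LinearMap.ker H.mulVecLin) (aa l) = (l - aa l).val)
    (hQ : ∀ j l, Q j l = H *ᵥ pastPart (x l) (aa l) j) (j : ZMod n) :
    (Q j).rank = #{l | l ≠ 0 ∧ j ∈ circIoc (aa l) l} := by
  rw [rank_eq_card_of_linearIndependent (Q j) (fun l => j ∈ circIoc (aa l) l)
    (fun l hl => (hQ j l).trans (mulVec_pastPart_eq_zero (hx l) (hspans l) hl))]
  · rw [Fintype.card_congr (Equiv.subtypeSubtypeEquivSubtypeInter (· ≠ 0)
      fun l => j ∈ circIoc (aa l) l), Fintype.card_subtype]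
  · convert (linearIndependent_mulVec_pastPart ha (fun l => (hspans l).1) hmin j).comp
      (fun l : {l : {l : ZMod n // l ≠ 0} // j ∈ circIoc (aa l) l} => ⟨l.1.1, l.2⟩)
      fun l l' h => Subtype.ext (Subtype.ext (congrArg Subtype.val h :)) using 1
    funext l
    exact hQ j l

end StateMatrix

theorem stmt14_general (F : Type*) [Field F] (n m : ℕ) [NeZero n]
    (H : Matrix (Fin m) (ZMod n) F) (hH : H.rank = m)
    (x : ZMod n → ZMod n → F) (aa : ZMod n → ZMod n)
    (hxC : ∀ l i, ∑ j, x l j * H i j = 0)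
    (hspans : ∀ l : ZMod n, IsSpan (x l) (aa l) l)
    (ha : Function.Injective aa)
    (hcover : ∀ j : ZMod n,
      (Finset.univ.filter fun l => j ∈ circIoc (aa l) l).card = m)
    (hsuppD : ∀ j : ZMod n, ∃ i, H i j ≠ 0)
    (Q : ZMod n → Matrix {l : ZMod n // l ≠ 0} (Fin m) F)
    (hQ0 : ∀ l c, Q 0 l c =
      ∑ j ∈ Finset.univ.filter (fun j : ZMod n => (aa l.1).val ≤ j.val), x l.1 j * H c j)
    (hQrec : ∀ j : ZMod n, Q (j + 1) = Q j + Matrix.of (fun l c => x l.1 j * H c j)) :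
    (∀ j ∈ circIoc (0 : ZMod n) (aa 0), (Q j).rank = m) ∧
    (∀ j ∉ circIoc (0 : ZMod n) (aa 0), (Q j).rank = m - 1) ∧
    (∃! v : Fin m → F, ∀ l, x l.1 0 = ∑ c, Q 1 l c * v c) := by
  have hx (l : ZMod n) : H *ᵥ x l = 0 :=
    funext fun i => by simpa [mulVec, dotProduct, mul_comm] using hxC l i
  have hdim : Module.finrank F (LinearMap.ker H.mulVecLin) + m = n := by
    have := H.mulVecLin.finrank_range_add_finrank_ker
    rw [Module.finrank_fintype_fun_eq_card, ZMod.card, ← rank, hH] at this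
    omega
  have hmin := minSpan_eq_of_isSpan hdim.le hx hspans ha hcover
  have ha0 : aa 0 ≠ 0 := (hspans 0).ne_of_mulVec_eq_zero (hx 0) (hsuppD _)
  have hrank (j : ZMod n) : (Q j).rank = if j ∈ circIoc 0 (aa 0) then m else m - 1 := by
    rw [rank_stateMatrix hx hspans ha hmin (stateMatrix_eq hx hQ0 hQrec), card_filter_ne_and,
      hcover, mem_circIoc_iff_not_mem_circIoc ha0.symm]
    split_ifs <;> simp_all
  refine ⟨fun j hj => by rw [hrank, if_pos hj], fun j hj => by rw [hrank, if_neg hj], ?_⟩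
  have h1 : (Q 1).rank = m := by rw [hrank, if_pos (one_mem_circIoc_zero ha0)]
  have h0 : (Q 0).rank = m - 1 := by rw [hrank, if_neg (by simp [circIoc])]
  have hm : 0 < m := (hsuppD 0).choose.pos
  have hQ1 : Q 1 = Q 0 + vecMulVec (fun l => x l.1 0) (fun c => H c 0) := by
    rw [← zero_add (1 : ZMod n), hQrec]
    rfl
  have hprobe (v : Fin m → F) :
      (∀ l, x l.1 0 = ∑ c, Q 1 l c * v c) ↔ Q 1 *ᵥ v = fun l => x l.1 0 := by
    simp [funext_iff, mulVec, dotProduct, eq_comm]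
  simp_rw [hprobe]
  rw [hQ1] at h1 ⊢
  exact existsUnique_mulVec_eq_of_rank_lt (by omega) (by rw [h1, Fintype.card_fin])

/-- Existence and uniqueness of the probing vector: with `Q_j` the BCJR state
matrices of the trellis built from all characteristic generators of `C = ker Hᵀ`
except the one with span `(a_0, 0]`, one has `rk Q_j = n−k` for `j ∈ (0, a_0]`
and `rk Q_j = n−k−1` otherwise, and there is a unique `v` with `G_0ᵀ = Q_1 vᵀ`. -/
theorem stmt14 (F : Type*) [Field F] (n k m : ℕ) [NeZero n] (hkm : k + m = n)
    (H : Matrix (Fin m) (ZMod n) F) (hH : H.rank = m)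
    (x : ZMod n → ZMod n → F) (aa : ZMod n → ZMod n)
    (hxC : ∀ l i, ∑ j, x l j * H i j = 0)
    (hspanC : Submodule.span F (Set.range x)
      = LinearMap.ker H.transpose.vecMulLinear)
    (hspans : ∀ l : ZMod n, IsSpan (x l) (aa l) l)
    (ha : Function.Injective aa)
    (hcover : ∀ j : ZMod n,
      (Finset.univ.filter fun l => j ∈ circIoc (aa l) l).card = m)
    (hsuppC : ∀ j : ZMod n, ∃ c ∈ LinearMap.ker H.transpose.vecMulLinear, c j ≠ 0)
    (hsuppD : ∀ j : ZMod n, ∃ i, H i j ≠ 0)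
    (Q : ZMod n → Matrix {l : ZMod n // l ≠ 0} (Fin m) F)
    (hQ0 : ∀ l c, Q 0 l c =
      ∑ j ∈ Finset.univ.filter (fun j : ZMod n => (aa l.1).val ≤ j.val), x l.1 j * H c j)
    (hQrec : ∀ j : ZMod n, Q (j + 1) = Q j + Matrix.of (fun l c => x l.1 j * H c j)) :
    (∀ j ∈ circIoc (0 : ZMod n) (aa 0), (Q j).rank = m) ∧
    (∀ j ∉ circIoc (0 : ZMod n) (aa 0), (Q j).rank = m - 1) ∧
    (∃! v : Fin m → F, ∀ l, x l.1 0 = ∑ c, Q 1 l c * v c) :=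
  stmt14_general F n m H hH x aa hxC hspans ha hcover hsuppD Q hQ0 hQrec
end

section
/- (Dual rank condition.) Let (X,T) be a characteristic pair of C and Y the dual characteristic matrix constructed row-wise via the probing vectors v_m (row m of Y is c^m = v_m H with span (m, a_m]). For any partition K ∪ K̂ = {0,...,n−1} with |K| = k, let X̃ be the k rows of X with indices in K and Ỹ the n−k rows of Y with indices in K̂. Then rk X̃ = k if and only if {v_m : m ∈ K̂} is linearly independent, if and only if rk Ỹ = n−k. -/
/-!
If `μ` is a relation among the rows of `X` (`∑ l, μ l • x l = 0`), then `μ ᵥ* N j` does not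
depend on `j`, because every step `N (j + 1) - N j` is a column of `X` times a column of `H`.
Evaluating at `j = mm`, where `N mm *ᵥ v mm` is concentrated on row `mm` with entry
`-x mm mm * c mm ≠ 0` (`c = v mm ᵥ* H` being the dual codeword), gives
`⟨μ ᵥ* N 0, v mm⟩ = -μ mm * x mm mm * c mm`. Hence `μ ↦ μ ᵥ* N 0` embeds the `m`-dimensional
space of relations into the dual of `Fin m → F`, so it is an isomorphism, and a nonzero relation
supported on `K` corresponds to a nonzero functional killing `v` on `Kᶜ`. The second equivalence
holds because `v ↦ v ᵥ* H` is injective.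
-/

open scoped Classical

open Module
open scoped Matrix

theorem Matrix.rank_eq_card_iff_linearIndependent {F ι κ : Type*} [Field F] [Fintype ι]
    [Fintype κ] (A : Matrix ι κ F) : A.rank = Fintype.card ι ↔ LinearIndependent F A.row :=
  ⟨fun h => linearIndependent_iff_card_eq_finrank_span.2 (h.symm.trans A.rank_eq_finrank_span_row),
    LinearIndependent.rank_matrix⟩

section Pairing

variable {F ι κ V W : Type*} [Field F] [AddCommGroup V] [Module F V]
  [AddCommGroup W] [Module F W] [FiniteDimensional F W]

theorem linearIndependent_iff_forall_dual_eq_zero [Fintype κ] {b : κ → W}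
    (hcard : Fintype.card κ = finrank F W) :
    LinearIndependent F b ↔ ∀ f : Dual F W, (∀ i, f (b i) = 0) → f = 0 := by
  refine ⟨fun hb f hf => LinearMap.ext_on_range (hb.span_eq_top_of_card_eq_finrank' hcard)
    fun i => by simpa using hf i, fun h => ?_⟩
  refine linearIndependent_of_top_le_span_of_card_eq_finrank (top_le_iff.2 ?_) hcard
  by_contra hne
  obtain ⟨f, hf, hle⟩ := Submodule.exists_le_ker_of_lt_top _ (lt_top_iff_ne_top.2 hne)
  exact hf (h f fun i => hle (Submodule.subset_span ⟨i, rfl⟩))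

variable [Fintype ι]

theorem linearIndependent_finset_iff {x : ι → V} {K : Finset ι} :
    LinearIndependent F (fun i : K => x i) ↔
      ∀ μ : ι → F, (∀ i ∉ K, μ i = 0) → Fintype.linearCombination F x μ = 0 → μ = 0 := by
  show LinearIndepOn F x (K : Set ι) ↔ _
  rw [linearIndepOn_iff]
  let e := Finsupp.linearEquivFunOnFinite F F ι
  refine ⟨fun h μ hμ hrel => ?_, fun h l hl hrel => ?_⟩
  · refine (LinearEquiv.map_eq_zero_iff e.symm).1 (h _ ((Finsupp.mem_supported' _ _).2 ?_) ?_)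
    · simpa [e] using hμ
    · rwa [Finsupp.linearCombination_eq_fintype_linearCombination_apply]
  · refine DFunLike.coe_injective (h l ?_ ?_)
    · simpa using (Finsupp.mem_supported' _ _).1 hl
    · rwa [← e.symm_apply_apply l, Finsupp.linearCombination_eq_fintype_linearCombination_apply]
        at hrel

theorem linearIndependent_finset_iff_compl_of_pairing [DecidableEq ι] {x : ι → V} {v : ι → W}
    (B : (ι → F) →ₗ[F] Dual F W) {d : ι → F} (hd : ∀ i, d i ≠ 0)
    (hB : ∀ μ, Fintype.linearCombination F x μ = 0 → ∀ i, B μ (v i) = μ i * d i)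
    (hdim : finrank F (LinearMap.ker (Fintype.linearCombination F x)) = finrank F W)
    (K : Finset ι) (hK : Kᶜ.card = finrank F W) :
    LinearIndependent F (fun i : K => x i) ↔ LinearIndependent F (fun i : ↑(Kᶜ) => v i) := by
  have eq_zero : ∀ μ, Fintype.linearCombination F x μ = 0 → B μ = 0 → μ = 0 := fun μ hμ h0 =>
    funext fun i => (mul_eq_zero.1 ((hB μ hμ i).symm.trans (by simp [h0]))).resolve_right (hd i)
  have surj : ∀ f : Dual F W, ∃ μ, Fintype.linearCombination F x μ = 0 ∧ B μ = f := by
    let Φ := B ∘ₗ (LinearMap.ker (Fintype.linearCombination F x)).subtype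
    have hΦ : Function.Injective Φ := (injective_iff_map_eq_zero Φ).2 fun μ h0 =>
      Subtype.ext (eq_zero μ μ.2 h0)
    intro f
    obtain ⟨μ, rfl⟩ := (LinearMap.injective_iff_surjective_of_finrank_eq_finrank
      (by rw [hdim, Subspace.dual_finrank_eq])).1 hΦ f
    exact ⟨μ, μ.2, rfl⟩
  rw [linearIndependent_finset_iff,
    linearIndependent_iff_forall_dual_eq_zero (by rw [Fintype.card_coe, hK])]
  refine ⟨fun hx f hf => ?_, fun hv μ hμK hμ => eq_zero μ hμ (hv _ fun i => ?_)⟩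
  · obtain ⟨μ, hμ, rfl⟩ := surj f
    have hμK : ∀ i ∉ K, μ i = 0 := fun i hi => (mul_eq_zero.1 ((hB μ hμ i).symm.trans
      (hf ⟨i, Finset.mem_compl.2 hi⟩))).resolve_right (hd i)
    rw [hx μ hμK hμ, map_zero]
  · rw [hB μ hμ, hμK i (Finset.mem_compl.1 i.2), zero_mul]

end Pairing

theorem eq_add_sum_range_of_add_one {R M : Type*} [AddMonoidWithOne R] [AddCommMonoid M]
    {f g : R → M} (h : ∀ r, f (r + 1) = f r + g r) (k : ℕ) :
    f k = f 0 + ∑ i ∈ Finset.range k, g i := by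
  induction k with
  | zero => simp
  | succ k ih => rw [Nat.cast_succ, h, ih, Finset.sum_range_succ, add_assoc]

namespace ZMod

variable {n : ℕ} [NeZero n]

theorem val_sub_of_lt {a b : ZMod n} (h : a.val < b.val) : (a - b).val = n - (b.val - a.val) := by
  rw [← neg_sub, neg_val, if_neg (sub_ne_zero.2 fun hab => h.ne (congrArg val hab).symm),
    val_sub h.le]

theorem sum_range_val {M : Type*} [AddCommMonoid M] (f : ZMod n → M) (b : ZMod n) :
    ∑ i ∈ Finset.range b.val, f i
      = ∑ j ∈ Finset.univ.filter (fun j : ZMod n => j.val < b.val), f j :=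
  Finset.sum_nbij' (fun i => (i : ZMod n)) val
    (fun i hi => by simpa [val_cast_of_lt ((Finset.mem_range.1 hi).trans b.val_lt)] using hi)
    (fun j hj => by simpa using hj)
    (fun i hi => val_cast_of_lt ((Finset.mem_range.1 hi).trans b.val_lt))
    (fun j _ => natCast_zmod_val j) fun _ _ => rfl

theorem mem_circIcc_iff {a b j : ZMod n} : j ∈ circIcc a b ↔
    if a.val ≤ b.val then a.val ≤ j.val ∧ j.val ≤ b.val else a.val ≤ j.val ∨ j.val ≤ b.val := by
  have hjn := j.val_lt
  have hbn := b.val_lt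
  have han := a.val_lt
  change (j - a).val ≤ (b - a).val ↔ _
  rcases le_or_gt a.val j.val with hj | hj <;> rcases le_or_gt a.val b.val with hb | hb
  · rw [val_sub hj, val_sub hb, if_pos hb]; omega
  · rw [val_sub hj, val_sub_of_lt hb, if_neg hb.not_ge]; omega
  · rw [val_sub_of_lt hj, val_sub hb, if_pos hb]; omega
  · rw [val_sub_of_lt hj, val_sub_of_lt hb, if_neg hb.not_ge]; omega

theorem sum_filter_val_ge_add_sum_range_val {M : Type*} [AddCommGroup M] {f : ZMod n → M}
    {a b : ZMod n} (hsum : ∑ j, f j = 0) (hsupp : ∀ j, f j ≠ 0 → j ∈ circIcc a b) :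
    ∑ j ∈ Finset.univ.filter (fun j : ZMod n => a.val ≤ j.val), f j
      + ∑ i ∈ Finset.range b.val, f i = -f b := by
  have hle : ∑ j ∈ Finset.univ.filter (fun j : ZMod n => j.val ≤ b.val), f j
      = ∑ i ∈ Finset.range b.val, f i + f b := by
    rw [sum_range_val, add_comm, ← Finset.sum_insert (by simp)]
    congr 1
    ext j
    simp only [Finset.mem_filter, Finset.mem_univ, true_and, Finset.mem_insert]
    exact ⟨fun h => (eq_or_lt_of_le h).imp_left fun h => val_injective n h,
      by rintro (rfl | h) <;> omega⟩
  rw [eq_neg_iff_add_eq_zero, add_assoc, ← hle]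
  have hmem : ∀ j, f j ≠ 0 → _ := fun j hj => mem_circIcc_iff.1 (hsupp j hj)
  by_cases hab : a.val ≤ b.val
  · simp only [hab, if_true] at hmem
    rw [Finset.sum_filter_of_ne fun j _ hj => (hmem j hj).2,
      Finset.sum_filter_of_ne fun j _ hj => (hmem j hj).1, hsum, add_zero]
  · simp only [hab, if_false] at hmem
    rw [← Finset.sum_union (Finset.disjoint_filter.2 fun j _ h1 h2 => hab (by omega)),
      ← Finset.filter_or, Finset.sum_filter_of_ne fun j _ hj => hmem j hj, hsum]

end ZMod

section StateMatrix

variable {F ι κ : Type*} [Field F] {n : ℕ} [NeZero n]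
  {x : ι → ZMod n → F} {H : Matrix κ (ZMod n) F} {N : ZMod n → Matrix ι κ F}

theorem stateMatrix_eq_add_sum
    (hNrec : ∀ j, N (j + 1) = N j + Matrix.of fun l c => x l j * H c j) (j : ZMod n) :
    N j = N 0 + ∑ i ∈ Finset.range j.val, Matrix.of fun l c => x l i * H c i := by
  rw [← eq_add_sum_range_of_add_one hNrec, ZMod.natCast_zmod_val]

theorem vecMul_stateMatrix_eq [Fintype ι]
    (hNrec : ∀ j, N (j + 1) = N j + Matrix.of fun l c => x l j * H c j)
    {μ : ι → F} (hμ : Fintype.linearCombination F x μ = 0) (j : ZMod n) :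
    μ ᵥ* N j = μ ᵥ* N 0 := by
  have hcol : ∀ i, ∑ l, μ l * x l i = 0 := fun i => by
    simpa [Fintype.linearCombination_apply] using congrFun hμ i
  rw [stateMatrix_eq_add_sum hNrec, Matrix.vecMul_add, Matrix.vecMul_sum, add_eq_left]
  refine Finset.sum_eq_zero fun i _ => funext fun c => ?_
  simp only [Matrix.vecMul, dotProduct, Matrix.of_apply, Pi.zero_apply, ← mul_assoc,
    ← Finset.sum_mul, hcol, zero_mul]

end StateMatrix

section Probe

variable {F : Type*} [Field F] {n m : ℕ} [NeZero n] {x : ZMod n → ZMod n → F}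
  {H : Matrix (Fin m) (ZMod n) F} {aa : ZMod n → ZMod n} {N : ZMod n → Matrix (ZMod n) (Fin m) F}
  {v : ZMod n → Fin m → F}

theorem stateMatrix_diag (hxC : ∀ l i, ∑ j, x l j * H i j = 0)
    (hspans : ∀ l : ZMod n, IsSpan (x l) (aa l) l)
    (hN0 : ∀ l c, N 0 l c =
      ∑ j ∈ Finset.univ.filter (fun j : ZMod n => (aa l).val ≤ j.val), x l j * H c j)
    (hNrec : ∀ j : ZMod n, N (j + 1) = N j + Matrix.of (fun l c => x l j * H c j))
    (l : ZMod n) (c : Fin m) : N l l c = -(x l l * H c l) := by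
  rw [stateMatrix_eq_add_sum hNrec, Matrix.add_apply, Matrix.sum_apply, hN0]
  simp only [Matrix.of_apply]
  exact ZMod.sum_filter_val_ge_add_sum_range_val (hxC l c)
    fun j hj => (hspans l).2.2 j (left_ne_zero_of_mul hj)

theorem stateMatrix_mulVec_probe (hxC : ∀ l i, ∑ j, x l j * H i j = 0)
    (hspans : ∀ l : ZMod n, IsSpan (x l) (aa l) l)
    (hN0 : ∀ l c, N 0 l c =
      ∑ j ∈ Finset.univ.filter (fun j : ZMod n => (aa l).val ≤ j.val), x l j * H c j)
    (hNrec : ∀ j : ZMod n, N (j + 1) = N j + Matrix.of (fun l c => x l j * H c j))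
    (hvanish : ∀ mm : ZMod n, ∀ j ∉ circIoc mm (aa mm), ∀ l ≠ mm, ∑ c, N j l c * v mm c = 0)
    (mm : ZMod n) :
    N mm *ᵥ v mm = Pi.single mm (-(x mm mm * (v mm ᵥ* H) mm)) := by
  ext l
  rcases eq_or_ne l mm with rfl | hl
  · simp only [Matrix.mulVec, dotProduct, stateMatrix_diag hxC hspans hN0 hNrec,
      Pi.single_eq_same, Matrix.vecMul, neg_mul, Finset.sum_neg_distrib, Finset.mul_sum]
    exact congrArg _ (Finset.sum_congr rfl fun c _ => by ring)
  · rw [Pi.single_eq_of_ne hl]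
    exact hvanish mm mm (by simp [circIoc]) l hl

theorem toLinearMap₂'_stateMatrix_probe (hxC : ∀ l i, ∑ j, x l j * H i j = 0)
    (hspans : ∀ l : ZMod n, IsSpan (x l) (aa l) l)
    (hN0 : ∀ l c, N 0 l c =
      ∑ j ∈ Finset.univ.filter (fun j : ZMod n => (aa l).val ≤ j.val), x l j * H c j)
    (hNrec : ∀ j : ZMod n, N (j + 1) = N j + Matrix.of (fun l c => x l j * H c j))
    (hvanish : ∀ mm : ZMod n, ∀ j ∉ circIoc mm (aa mm), ∀ l ≠ mm, ∑ c, N j l c * v mm c = 0)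
    {μ : ZMod n → F} (hμ : Fintype.linearCombination F x μ = 0) (mm : ZMod n) :
    Matrix.toLinearMap₂' F (N 0) μ (v mm) = μ mm * -(x mm mm * (v mm ᵥ* H) mm) := by
  rw [Matrix.toLinearMap₂'_apply', Matrix.dotProduct_mulVec, ← vecMul_stateMatrix_eq hNrec hμ mm,
    ← Matrix.dotProduct_mulVec, stateMatrix_mulVec_probe hxC hspans hN0 hNrec hvanish,
    dotProduct_single]

end Probe

theorem stmt16_general (F : Type*) [Field F] (n k m : ℕ) [NeZero n] (hkm : k + m = n)
    (H : Matrix (Fin m) (ZMod n) F) (hH : H.rank = m)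
    (x : ZMod n → ZMod n → F) (aa : ZMod n → ZMod n)
    (hxC : ∀ l i, ∑ j, x l j * H i j = 0)
    (hspanC : Submodule.span F (Set.range x)
      = LinearMap.ker H.transpose.vecMulLinear)
    (hspans : ∀ l : ZMod n, IsSpan (x l) (aa l) l)
    (N : ZMod n → Matrix (ZMod n) (Fin m) F)
    (hN0 : ∀ l c, N 0 l c =
      ∑ j ∈ Finset.univ.filter (fun j : ZMod n => (aa l).val ≤ j.val), x l j * H c j)
    (hNrec : ∀ j : ZMod n, N (j + 1) = N j + Matrix.of (fun l c => x l j * H c j))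
    (v : ZMod n → Fin m → F)
    (hvanish : ∀ mm : ZMod n, ∀ j ∉ circIoc mm (aa mm),
      ∀ l ≠ mm, ∑ c, N j l c * v mm c = 0)
    (hcm : ∀ mm : ZMod n, IsSpan (fun j => ∑ i, v mm i * H i j) mm (aa mm))
    (K : Finset (ZMod n)) (hK : K.card = k) :
    ((Matrix.of fun (l : ↑K) j => x l.1 j).rank = k
        ↔ LinearIndependent F (fun mm : ↑(Kᶜ) => v mm.1)) ∧
    (LinearIndependent F (fun mm : ↑(Kᶜ) => v mm.1)
        ↔ (Matrix.of fun (mm : ↑(Kᶜ)) j => ∑ i, v mm.1 i * H i j).rank = n - k) := by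
  have hKc : Kᶜ.card = m := by rw [Finset.card_compl, ZMod.card, hK]; omega
  have hrel : finrank F (LinearMap.ker (Fintype.linearCombination F x)) = m := by
    have hC := LinearMap.finrank_range_add_finrank_ker H.mulVecLin
    have hX := LinearMap.finrank_range_add_finrank_ker (Fintype.linearCombination F x)
    rw [Fintype.range_linearCombination, hspanC, Matrix.vecMulLinear_transpose] at hX
    change H.rank + _ = _ at hC
    omega
  have hHinj : Function.Injective H.vecMul := Matrix.vecMul_injective_iff.2
    ((H.rank_eq_card_iff_linearIndependent).1 (by rw [hH, Fintype.card_fin]))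
  refine ⟨?_, ?_⟩
  · rw [show k = Fintype.card ↥K by rw [Fintype.card_coe, hK],
      Matrix.rank_eq_card_iff_linearIndependent]
    exact linearIndependent_finset_iff_compl_of_pairing (Matrix.toLinearMap₂' F (N 0))
      (fun mm => neg_ne_zero.2 (mul_ne_zero (hspans mm).2.1 (hcm mm).1))
      (fun _ => toLinearMap₂'_stateMatrix_probe hxC hspans hN0 hNrec hvanish)
      (by rw [hrel, finrank_fin_fun]) K (by rw [hKc, finrank_fin_fun])
  · rw [show n - k = Fintype.card ↥(Kᶜ) by rw [Fintype.card_coe, hKc]; omega,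
      Matrix.rank_eq_card_iff_linearIndependent]
    exact (LinearMap.linearIndependent_iff H.vecMulLinear
      (LinearMap.ker_eq_bot.2 hHinj)).symm

/-- Dual rank condition: with `X` a characteristic matrix of `C = ker Hᵀ` (spans
`(a_l, l]`), `N_j` the BCJR state matrices of the full trellis, `v_m` the probing
vectors and `Y` the dual characteristic matrix with rows `c^m = v_m H`, for any
partition `K ∪ K̂` of the index set with `|K| = k`:
`rk X̃ = k ⟺ {v_m : m ∈ K̂} linearly independent ⟺ rk Ỹ = n−k`. -/
theorem stmt16 (F : Type*) [Field F] (n k m : ℕ) [NeZero n] (hkm : k + m = n)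
    (H : Matrix (Fin m) (ZMod n) F) (hH : H.rank = m)
    (x : ZMod n → ZMod n → F) (aa : ZMod n → ZMod n)
    (hxC : ∀ l i, ∑ j, x l j * H i j = 0)
    (hspanC : Submodule.span F (Set.range x)
      = LinearMap.ker H.transpose.vecMulLinear)
    (hspans : ∀ l : ZMod n, IsSpan (x l) (aa l) l)
    (ha : Function.Injective aa)
    (hcover : ∀ j : ZMod n,
      (Finset.univ.filter fun l => j ∈ circIoc (aa l) l).card = m)
    (hsuppC : ∀ j : ZMod n, ∃ c ∈ LinearMap.ker H.transpose.vecMulLinear, c j ≠ 0)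
    (hsuppD : ∀ j : ZMod n, ∃ i, H i j ≠ 0)
    (N : ZMod n → Matrix (ZMod n) (Fin m) F)
    (hN0 : ∀ l c, N 0 l c =
      ∑ j ∈ Finset.univ.filter (fun j : ZMod n => (aa l).val ≤ j.val), x l j * H c j)
    (hNrec : ∀ j : ZMod n, N (j + 1) = N j + Matrix.of (fun l c => x l j * H c j))
    (v : ZMod n → Fin m → F)
    (hv : ∀ mm : ZMod n, ∀ l ≠ mm, x l mm = ∑ c, N (mm + 1) l c * v mm c)
    (hvanish : ∀ mm : ZMod n, ∀ j ∉ circIoc mm (aa mm),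
      ∀ l ≠ mm, ∑ c, N j l c * v mm c = 0)
    (hcm : ∀ mm : ZMod n, IsSpan (fun j => ∑ i, v mm i * H i j) mm (aa mm))
    (K : Finset (ZMod n)) (hK : K.card = k) :
    ((Matrix.of fun (l : ↑K) j => x l.1 j).rank = k
        ↔ LinearIndependent F (fun mm : ↑(Kᶜ) => v mm.1)) ∧
    (LinearIndependent F (fun mm : ↑(Kᶜ) => v mm.1)
        ↔ (Matrix.of fun (mm : ↑(Kᶜ)) j => ∑ i, v mm.1 i * H i j).rank = n - k) :=
  stmt16_general F n k m hkm H hH x aa hxC hspanC hspans N hN0 hNrec v hvanish hcm K hK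
end
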